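/- Set m_β = min_{|ξ|=1} |1 − φ̂(βξ)|² and M_β = max_{|ξ|=1} |1 − φ̂(βξ)|². Then there exist positive constants ν₀ and C₀ such that for all β ∈ (0,1] and all ξ ∈ ℝⁿ \ {0}: ν₀ ( |ξ|^{2s} 𝟙_{|ξ| ≤ 1/β} + (1/M_β) 𝟙_{|ξ| > 1/β} ) ≤ |1 − φ̂(βξ)|² / |1 − φ̂(βξ/|ξ|)|² ≤ C₀ |ξ|^{2s}. -/

import Mathlib

/-
STATEMENT 5: With m_β = min_{|ξ|=1} |1 − φ̂(βξ)|² and M_β = max_{|ξ|=1} |1 − φ̂(βξ)|²,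
there exist positive constants ν₀ and C₀ such that for all β ∈ (0,1] and all ξ ≠ 0:
ν₀ ( |ξ|^{2s} 𝟙_{|ξ| ≤ 1/β} + (1/M_β) 𝟙_{|ξ| > 1/β} )
  ≤ |1 − φ̂(βξ)|² / |1 − φ̂(βξ/|ξ|)|² ≤ C₀ |ξ|^{2s}.
-/

open MeasureTheory Filter
open scoped Topology ENNReal

noncomputable section

abbrev Rn (n : ℕ) : Type := EuclideanSpace ℝ (Fin n)

/-- φ̂, the Fourier transform of the kernel φ. -/
def phiHat (n : ℕ) (φ : Rn n → ℝ) (ξ : Rn n) : ℂ :=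
  VectorFourier.fourierIntegral Real.fourierChar volume (innerₗ (Rn n)) (fun x => (φ x : ℂ)) ξ

lemma low_ia (x y z P Q : ℝ) (hx0 : 0 ≤ x) (hy0 : 0 ≤ y) (hz0 : 0 ≤ z)
    (hP0 : 0 ≤ P) (hx1 : x ≤ 1) (hQ : z*y/4 ≤ Q) (hP : P ≤ 9/4*z) :
    x^2*y*P ≤ 16*Q := by
  have hx2 : x^2 ≤ 1 := by nlinarith
  have h1 : x^2*y*P ≤ y*P := by nlinarith [mul_nonneg hy0 hP0]
  have h2 : y*P ≤ 9/4*(y*z) := by nlinarith [mul_nonneg hy0 (sub_nonneg.2 hP)]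
  nlinarith [mul_nonneg hy0 hz0]

lemma low_ib (x y z P Q : ℝ) (hx0 : 0 ≤ x) (hy0 : 0 ≤ y) (hz0 : 0 ≤ z)
    (hP0 : 0 ≤ P) (hx1 : x ≤ 1) (hxz : x ≤ z) (hQ : z*y/4 ≤ Q) (hP : P ≤ 4) :
    x^2*y*P ≤ 16*Q := by nlinarith [mul_nonneg (mul_nonneg hx0 hx0) hy0, mul_nonneg hx0 hy0, mul_nonneg (mul_nonneg hx0 hy0) (sub_nonneg.2 hP), mul_nonneg (mul_nonneg hx0 hx0) (mul_nonneg hy0 (sub_nonneg.2 hP))]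

lemma low_iia (x y z P Q : ℝ) (hx0 : 0 ≤ x) (hy0 : 0 ≤ y) (hz0 : 0 ≤ z)
    (hP0 : 0 ≤ P) (hx1 : x ≤ 1) (hyz1 : z*y ≤ 1) (hQ : x/4 ≤ Q) (hP : P ≤ 9/4*z) :
    x^2*y*P ≤ 16*Q := by nlinarith [mul_nonneg (mul_nonneg hx0 hx0) hy0, mul_nonneg hx0 hx0, mul_nonneg (mul_nonneg (mul_nonneg hx0 hx0) hy0) (sub_nonneg.2 hP), mul_nonneg (mul_nonneg hx0 hx0) (sub_nonneg.2 hyz1)]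

lemma low_iib (x y P Q : ℝ) (hx0 : 0 ≤ x) (hy0 : 0 ≤ y)
    (hP0 : 0 ≤ P) (hxy1 : x*y ≤ 1) (hQ : x/4 ≤ Q) (hP : P ≤ 4) :
    x^2*y*P ≤ 16*Q := by nlinarith [mul_nonneg (mul_nonneg hx0 hy0) (sub_nonneg.2 hP), mul_nonneg hx0 (sub_nonneg.2 hxy1), mul_nonneg (mul_nonneg hx0 hx0) (mul_nonneg hy0 (sub_nonneg.2 hP)), mul_nonneg (mul_nonneg hx0 hx0) hy0]

lemma low_else (x Q : ℝ) (hx0 : 0 ≤ x) (hx1 : x ≤ 1) (hQ : x/4 ≤ Q) :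
    x^2/16 ≤ Q := by nlinarith

lemma up_ia (x y z P Q : ℝ) (hx0 : 0 ≤ x) (hy0 : 0 ≤ y) (hz0 : 0 ≤ z)
    (hQ0 : 0 ≤ Q) (hx1 : x ≤ 1) (hQ : Q ≤ 9/4*(z*y)) (hP : z/4 ≤ P) :
    Q*x^2 ≤ 16*(y*P) := by nlinarith [mul_nonneg hQ0 (mul_nonneg hx0 hx0), mul_nonneg hy0 hz0, mul_nonneg hQ0 hx0]

lemma up_ib (x y z P Q : ℝ) (hx0 : 0 ≤ x) (hy0 : 0 ≤ y) (hz0 : 0 ≤ z)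
    (hQ0 : 0 ≤ Q) (hx1 : x ≤ 1) (hz1 : z ≤ 1) (hQ : Q ≤ 9/4*(z*y)) (hP : x/4 ≤ P) :
    Q*x^2 ≤ 16*(y*P) := by nlinarith [mul_nonneg hQ0 (mul_nonneg hx0 hx0), mul_nonneg (mul_nonneg hx0 hy0) (sub_nonneg.2 hz1), mul_nonneg (mul_nonneg hx0 hx0) (mul_nonneg hy0 hz0), mul_nonneg hx0 (mul_nonneg hy0 hz0), mul_nonneg (mul_nonneg hx0 hy0) hz0, mul_nonneg hx0 hy0]

lemma up_iia (x y z P Q : ℝ) (hx0 : 0 ≤ x) (hy0 : 0 ≤ y) (hz0 : 0 ≤ z)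
    (hQ0 : 0 ≤ Q) (hx1 : x ≤ 1) (hxzy : x ≤ z*y) (hQ : Q ≤ 4) (hP : z/4 ≤ P) :
    Q*x^2 ≤ 16*(y*P) := by nlinarith [mul_nonneg hx0 hx0, mul_nonneg (mul_nonneg hx0 hx0) (sub_nonneg.2 hQ), mul_nonneg hx0 (sub_nonneg.2 hQ)]

lemma up_iib (x y P Q : ℝ) (hx0 : 0 ≤ x) (hy0 : 0 ≤ y)
    (hQ0 : 0 ≤ Q) (hx1 : x ≤ 1) (hxy : x ≤ y) (hQ : Q ≤ 4) (hP : x/4 ≤ P) :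
    Q*x^2 ≤ 16*(y*P) := by nlinarith [mul_nonneg hx0 hx0, mul_nonneg (mul_nonneg hx0 hx0) (sub_nonneg.2 hQ), mul_nonneg hx0 (sub_nonneg.2 hQ), mul_nonneg hx0 hy0]


set_option maxHeartbeats 1600000 in
lemma stmt5_aux (s δ : ℝ) (hs : 0 < s) (hδ : 0 < δ) (hδ1 : δ ≤ 1)
    (F : ℝ → ℝ)
    (hFpos : ∀ r : ℝ, 0 < r → 0 < F r)
    (hFle2 : ∀ r : ℝ, 0 < r → F r ≤ 2)
    (hFmono : ∀ a b : ℝ, 0 < a → a ≤ b → F a ≤ F b)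
    (hF : ∀ r : ℝ, 0 < r → r ≤ δ → (1/2) * r ^ s ≤ F r ∧ F r ≤ (3/2) * r ^ s)
    (β r : ℝ) (hβ : 0 < β) (hβ1 : β ≤ 1) (hr : 0 < r) :
    (δ ^ (4*s) / 16) * (if r ≤ 1/β then r ^ (2*s) else 1 / (F β)^2)
      ≤ F (β*r)^2 / (F β)^2 ∧
    F (β*r)^2 / (F β)^2 ≤ (16 / δ ^ (4*s)) * r ^ (2*s) := by
  have hapos : 0 < δ ^ s := Real.rpow_pos_of_pos hδ s
  have hbpos : 0 < r ^ s := Real.rpow_pos_of_pos hr s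
  have hcpos : 0 < β ^ s := Real.rpow_pos_of_pos hβ s
  set a := δ ^ s with ha
  set b := r ^ s with hb
  set c := β ^ s with hc
  have ha1 : a ≤ 1 := Real.rpow_le_one hδ.le hδ1 hs.le
  have hc1 : c ≤ 1 := Real.rpow_le_one hβ.le hβ1 hs.le
  have hδ4 : δ ^ (4*s) = a^4 := by
    rw [show (4:ℝ)*s = s*4 by ring, Real.rpow_mul hδ.le, ha,
      show (4:ℝ) = ((4:ℕ):ℝ) by norm_num, Real.rpow_natCast]
  have hr2 : r ^ (2*s) = b^2 := by
    rw [show (2:ℝ)*s = s*2 by ring, Real.rpow_mul hr.le, hb,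
      show (2:ℝ) = ((2:ℕ):ℝ) by norm_num, Real.rpow_natCast]
  have hβr : (β*r) ^ s = c * b := Real.mul_rpow hβ.le hr.le
  have hβrpos : 0 < β * r := mul_pos hβ hr
  set A := F β with hAdef
  set B := F (β*r) with hBdef
  have hA : 0 < A := hFpos β hβ
  have hB : 0 < B := hFpos _ hβrpos
  have hA2 : A ≤ 2 := hFle2 β hβ
  have hB2 : B ≤ 2 := hFle2 _ hβrpos
  have hFδ := hF δ hδ (le_refl δ)
  have hFδ1 : a/2 ≤ F δ := by linarith [hFδ.1]
  clear_value a b c A B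
  have hBlow : β*r ≤ δ → 1/2*(c*b) ≤ B := fun h => by
    rw [hBdef]; have h2 := (hF _ hβrpos h).1; rwa [hβr] at h2
  have hBup : β*r ≤ δ → B ≤ 3/2*(c*b) := fun h => by
    rw [hBdef]; have h2 := (hF _ hβrpos h).2; rwa [hβr] at h2
  have hBa : δ ≤ β*r → a/2 ≤ B := fun h => by
    rw [hBdef]; exact le_trans hFδ1 (hFmono δ _ hδ h)
  have hAlow : β ≤ δ → 1/2*c ≤ A := fun h => by
    rw [hAdef, hc]; exact (hF β hβ h).1
  have hAup : β ≤ δ → A ≤ 3/2*c := fun h => by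
    rw [hAdef, hc]; exact (hF β hβ h).2
  have hAa : δ ≤ β → a/2 ≤ A := fun h => by
    rw [hAdef]; exact le_trans hFδ1 (hFmono δ β hδ h)
  have hac : δ ≤ β → a ≤ c := fun h => by
    rw [ha, hc]; exact Real.rpow_le_rpow hδ.le h hs.le
  have hacb : δ ≤ β*r → a ≤ c*b := fun h => by
    rw [← hβr, ha]; exact Real.rpow_le_rpow hδ.le h hs.le
  have hcb1 : β*r ≤ 1 → c*b ≤ 1 := fun h => by
    rw [← hβr]; exact Real.rpow_le_one hβrpos.le h hs.le
  have habd : r ≤ δ⁻¹ → b ≤ a⁻¹ := fun h => by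
    rw [ha, hb, ← Real.inv_rpow hδ.le]
    exact Real.rpow_le_rpow hr.le h hs.le
  have hbab : δ ≤ r → a ≤ b := fun h => by
    rw [ha, hb]; exact Real.rpow_le_rpow hδ.le h hs.le
  rw [hδ4, hr2]
  clear hF hFmono hFpos hFle2 hFδ hFδ1 hAdef hBdef ha hb hc hδ4 hr2 hβr hs
  have hAsq4 : A^2 ≤ 4 := by nlinarith
  have hBsq4 : B^2 ≤ 4 := by nlinarith
  have hasq1 : a^2 ≤ 1 := by nlinarith
  have hcsq1 : c^2 ≤ 1 := by nlinarith
  constructor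
  · -- lower bound
    split_ifs with hif
    · -- r ≤ 1/β, so β*r ≤ 1
      have hβr1 : β * r ≤ 1 := by
        rw [mul_comm]; exact (le_div_iff₀ hβ).mp hif
      rw [le_div_iff₀ (by positivity)]
      have goal' : (a^2)^2*(b^2)*(A^2) ≤ 16*(B^2) → a ^ 4 / 16 * b ^ 2 * A ^ 2 ≤ B ^ 2 := by
        intro h; nlinarith
      apply goal'
      rcases le_or_gt (β*r) δ with hcase | hcase
      · have hBge := hBlow hcase
        have hQ : c^2*b^2/4 ≤ B^2 := by
          nlinarith [pow_le_pow_left₀ (by positivity : (0:ℝ) ≤ 1/2*(c*b)) hBge 2]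
        rcases le_or_gt β δ with hc2 | hc2
        · have hP : A^2 ≤ 9/4*(c^2) := by
            nlinarith [pow_le_pow_left₀ hA.le (hAup hc2) 2]
          exact low_ia (a^2) (b^2) (c^2) (A^2) (B^2) (by positivity) (by positivity) (by positivity)
            (by positivity) hasq1 hQ hP
        · have hca := hac hc2.le
          exact low_ib (a^2) (b^2) (c^2) (A^2) (B^2) (by positivity) (by positivity) (by positivity)
            (by positivity) hasq1 (by nlinarith) hQ hAsq4
      · have hBge := hBa hcase.le
        have hQ : a^2/4 ≤ B^2 := by
          nlinarith [pow_le_pow_left₀ (by positivity : (0:ℝ) ≤ a/2) hBge 2]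
        have hbc1 := hcb1 hβr1
        rcases le_or_gt β δ with hc2 | hc2
        · have hP : A^2 ≤ 9/4*(c^2) := by
            nlinarith [pow_le_pow_left₀ hA.le (hAup hc2) 2]
          exact low_iia (a^2) (b^2) (c^2) (A^2) (B^2) (by positivity) (by positivity) (by positivity)
            (by positivity) hasq1 (by nlinarith [mul_pos hcpos hbpos]) hQ hP
        · have hab : b ≤ a⁻¹ := habd (by
            rw [one_div] at hif
            exact hif.trans (inv_anti₀ hδ hc2.le))
          have hab1 : a * b ≤ 1 := by
            calc a * b ≤ a * a⁻¹ := by nlinarith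
            _ = 1 := mul_inv_cancel₀ hapos.ne'
          exact low_iib (a^2) (b^2) (A^2) (B^2) (by positivity) (by positivity)
            (by positivity) (by nlinarith [mul_pos hapos hbpos]) hQ hAsq4
    · -- r > 1/β : βr > 1 ≥ δ
      rw [not_le] at hif
      have hβr1 : 1 < β * r := by
        rw [div_lt_iff₀ hβ] at hif; linarith [hif]
      have hBge := hBa (by linarith)
      have hQ : a^2/4 ≤ B^2 := by
        nlinarith [pow_le_pow_left₀ (by positivity : (0:ℝ) ≤ a/2) hBge 2]
      have hkey : a^4/16 ≤ B^2 := by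
        have := low_else (a^2) (B^2) (by positivity) hasq1 hQ
        nlinarith
      calc a^4/16 * (1/A^2) = (a^4/16)/A^2 := by ring
      _ ≤ B^2/A^2 := by gcongr
  · -- upper bound
    rw [div_le_iff₀ (by positivity), show 16/a^4 * b^2 * A^2 = (16*(b^2*A^2))/a^4 by ring,
      le_div_iff₀ (by positivity)]
    have goal' : (B^2)*(a^2)^2 ≤ 16*((b^2)*(A^2)) → B ^ 2 * a ^ 4 ≤ 16 * (b ^ 2 * A ^ 2) := by
      intro h; nlinarith
    apply goal'
    rcases le_or_gt (β*r) δ with hcase | hcase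
    · have hBle := hBup hcase
      have hQ : B^2 ≤ 9/4*(c^2*b^2) := by
        nlinarith [pow_le_pow_left₀ hB.le hBle 2]
      rcases le_or_gt β δ with hc2 | hc2
      · have hP : c^2/4 ≤ A^2 := by
          nlinarith [pow_le_pow_left₀ (by positivity : (0:ℝ) ≤ 1/2*c) (hAlow hc2) 2]
        exact up_ia (a^2) (b^2) (c^2) (A^2) (B^2) (by positivity) (by positivity) (by positivity)
          (by positivity) hasq1 hQ hP
      · have hP : a^2/4 ≤ A^2 := by
          nlinarith [pow_le_pow_left₀ (by positivity : (0:ℝ) ≤ a/2) (hAa hc2.le) 2]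
        exact up_ib (a^2) (b^2) (c^2) (A^2) (B^2) (by positivity) (by positivity) (by positivity)
          (by positivity) hasq1 hcsq1 hQ hP
    · have hbc := hacb hcase.le
      have hbcsq : a^2 ≤ c^2*b^2 := by nlinarith [mul_pos hcpos hbpos]
      have hrδ : δ ≤ r := by nlinarith
      have hbasq : a^2 ≤ b^2 := by nlinarith [hbab hrδ]
      rcases le_or_gt β δ with hc2 | hc2
      · have hP : c^2/4 ≤ A^2 := by
          nlinarith [pow_le_pow_left₀ (by positivity : (0:ℝ) ≤ 1/2*c) (hAlow hc2) 2]
        exact up_iia (a^2) (b^2) (c^2) (A^2) (B^2) (by positivity) (by positivity) (by positivity)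
          (by positivity) hasq1 hbcsq hBsq4 hP
      · have hP : a^2/4 ≤ A^2 := by
          nlinarith [pow_le_pow_left₀ (by positivity : (0:ℝ) ≤ a/2) (hAa hc2.le) 2]
        exact up_iib (a^2) (b^2) (A^2) (B^2) (by positivity) (by positivity)
          (by positivity) hasq1 hbasq hBsq4 hP


set_option maxHeartbeats 1600000 in
theorem stmt5
    (n : ℕ) (hn : 0 < n) (s : ℝ) (hs : 0 < s)
    (φ : Rn n → ℝ) (hφint : Integrable φ (volume : Measure (Rn n)))
    (hφ1 : ∫ x, φ x = 1)
    (hreal : ∀ ξ : Rn n, (phiHat n φ ξ).im = 0)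
    (hdec : ∀ ξ η : Rn n, ‖ξ‖ ≤ ‖η‖ → (phiHat n φ η).re ≤ (phiHat n φ ξ).re)
    (hlt : ∀ ξ : Rn n, ξ ≠ 0 → ‖phiHat n φ ξ‖ < 1)
    (hasymp : Tendsto (fun ξ : Rn n => ‖1 - phiHat n φ ξ‖ / ‖ξ‖ ^ s) (𝓝[≠] 0) (𝓝 1))
    (m M : ℝ → ℝ)
    (hm : ∀ β : ℝ, 0 < β →
      IsLeast {v : ℝ | ∃ ξ : Rn n, ‖ξ‖ = 1 ∧ v = ‖1 - phiHat n φ (β • ξ)‖ ^ 2} (m β))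
    (hM : ∀ β : ℝ, 0 < β →
      IsGreatest {v : ℝ | ∃ ξ : Rn n, ‖ξ‖ = 1 ∧ v = ‖1 - phiHat n φ (β • ξ)‖ ^ 2} (M β)) :
    ∃ ν₀ : ℝ, 0 < ν₀ ∧ ∃ C₀ : ℝ, 0 < C₀ ∧
      ∀ β ∈ Set.Ioc (0 : ℝ) 1, ∀ ξ : Rn n, ξ ≠ 0 →
        ν₀ * (if ‖ξ‖ ≤ 1 / β then ‖ξ‖ ^ (2 * s) else 1 / M β) ≤
            ‖1 - phiHat n φ (β • ξ)‖ ^ 2 / ‖1 - phiHat n φ ((β * ‖ξ‖⁻¹) • ξ)‖ ^ 2 ∧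
          ‖1 - phiHat n φ (β • ξ)‖ ^ 2 / ‖1 - phiHat n φ ((β * ‖ξ‖⁻¹) • ξ)‖ ^ 2 ≤
            C₀ * ‖ξ‖ ^ (2 * s) := by
  obtain ⟨e, he⟩ : ∃ e : Rn n, ‖e‖ = 1 :=
    ⟨EuclideanSpace.single (⟨0, hn⟩ : Fin n) (1:ℝ), by simp⟩
  have he0 : e ≠ 0 := by
    intro h; rw [h, norm_zero] at he; norm_num at he
  have key : ∀ ξ η : Rn n, ‖ξ‖ = ‖η‖ → phiHat n φ ξ = phiHat n φ η := by
    intro ξ η h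
    apply Complex.ext
    · exact le_antisymm (hdec η ξ h.ge) (hdec ξ η h.le)
    · rw [hreal, hreal]
  set F : ℝ → ℝ := fun t => ‖1 - phiHat n φ (t • e)‖ with hFdef
  have hsm : ∀ t : ℝ, 0 ≤ t → ‖t • e‖ = t := fun t ht => by
    rw [norm_smul, he, mul_one, Real.norm_eq_abs, abs_of_nonneg ht]
  have hFnorm : ∀ η : Rn n, ‖1 - phiHat n φ η‖ = F ‖η‖ := by
    intro η
    have h : phiHat n φ η = phiHat n φ (‖η‖ • e) :=
      key _ _ (by rw [hsm _ (norm_nonneg η)])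
    show _ = ‖1 - phiHat n φ (‖η‖ • e)‖
    rw [h]
  have hFpos : ∀ t : ℝ, 0 < t → 0 < F t := by
    intro t ht
    have hz := hlt (t • e) (smul_ne_zero ht.ne' he0)
    have h1 : (1:ℂ) - phiHat n φ (t • e) ≠ 0 := by
      intro h
      rw [sub_eq_zero] at h
      rw [← h] at hz
      norm_num at hz
    exact norm_pos_iff.2 h1
  have hFle2 : ∀ t : ℝ, 0 < t → F t ≤ 2 := by
    intro t ht
    have hz := hlt (t • e) (smul_ne_zero ht.ne' he0)
    calc F t ≤ ‖(1:ℂ)‖ + ‖phiHat n φ (t • e)‖ := norm_sub_le _ _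
    _ ≤ 2 := by rw [norm_one]; linarith
  have hFre : ∀ t : ℝ, t ≠ 0 → F t = 1 - (phiHat n φ (t • e)).re := by
    intro t ht
    have hz := hlt (t • e) (smul_ne_zero ht he0)
    have him := hreal (t • e)
    have hre : (phiHat n φ (t • e)).re < 1 :=
      lt_of_le_of_lt (Complex.re_le_norm _) hz
    show ‖1 - phiHat n φ (t • e)‖ = _
    rw [show (1:ℂ) - phiHat n φ (t • e) = ((1 - (phiHat n φ (t • e)).re : ℝ) : ℂ) by
        apply Complex.ext <;> simp [him]]
    rw [Complex.norm_real, Real.norm_eq_abs, abs_of_pos (by linarith)]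
  have hFmono : ∀ x y : ℝ, 0 < x → x ≤ y → F x ≤ F y := by
    intro x y hx hxy
    have hy : 0 < y := lt_of_lt_of_le hx hxy
    rw [hFre x hx.ne', hFre y hy.ne']
    have := hdec (x • e) (y • e) (by rw [hsm x hx.le, hsm y hy.le]; exact hxy)
    linarith
  have hmap : Tendsto (fun t : ℝ => t • e) (𝓝[>] (0:ℝ)) (𝓝[≠] (0 : Rn n)) := by
    rw [tendsto_nhdsWithin_iff]
    constructor
    · have h : Tendsto (fun t : ℝ => t • e) (𝓝 (0:ℝ)) (𝓝 ((0:ℝ) • e)) :=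
        (continuous_id.smul continuous_const).tendsto 0
      rw [zero_smul] at h
      exact h.mono_left nhdsWithin_le_nhds
    · filter_upwards [self_mem_nhdsWithin] with t ht
      exact smul_ne_zero (ne_of_gt ht) he0
  have hrad : Tendsto (fun t : ℝ => F t / t ^ s) (𝓝[>] (0:ℝ)) (𝓝 1) := by
    have h := hasymp.comp hmap
    apply h.congr'
    filter_upwards [self_mem_nhdsWithin] with t ht
    simp only [Function.comp_apply]
    rw [hsm t ht.le]
  obtain ⟨δ, hδpos, hδ1, hδprop⟩ : ∃ δ : ℝ, 0 < δ ∧ δ ≤ 1 ∧ ∀ t : ℝ, 0 < t → t ≤ δ →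
      (1/2) * t ^ s ≤ F t ∧ F t ≤ (3/2) * t ^ s := by
    have hev : ∀ᶠ t in 𝓝[>] (0:ℝ), |F t / t ^ s - 1| < 1/2 := by
      have h := Metric.tendsto_nhds.mp hrad (1/2) (by norm_num)
      simpa [Real.dist_eq] using h
    obtain ⟨u, hu, hsub⟩ := mem_nhdsGT_iff_exists_Ioc_subset.mp hev
    refine ⟨min u 1, lt_min hu (by norm_num), min_le_right _ _, ?_⟩
    intro t ht htδ
    have htu : t ∈ Set.Ioc (0:ℝ) u := ⟨ht, htδ.trans (min_le_left _ _)⟩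
    have habs := hsub htu
    rw [Set.mem_setOf_eq, abs_lt] at habs
    have hts : 0 < t ^ s := Real.rpow_pos_of_pos ht s
    constructor
    · have := (lt_div_iff₀ hts).mp (by linarith [habs.1] : (1:ℝ)/2 < F t / t ^ s)
      linarith
    · have := (div_lt_iff₀ hts).mp (by linarith [habs.2] : F t / t ^ s < 3/2)
      linarith
  have hMval : ∀ β : ℝ, 0 < β → M β = F β ^ 2 := by
    intro β hβ
    obtain ⟨ξ0, hξ0, hval⟩ := (hM β hβ).1
    rw [hval, hFnorm (β • ξ0)]
    congr 2
    rw [norm_smul, hξ0, mul_one, Real.norm_eq_abs, abs_of_pos hβ]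
  refine ⟨δ ^ (4*s) / 16, by positivity, 16 / δ ^ (4*s), by positivity, ?_⟩
  rintro β ⟨hβ0, hβ1⟩ ξ hξ
  have hr : 0 < ‖ξ‖ := norm_pos_iff.mpr hξ
  have haux := stmt5_aux s δ hs hδpos hδ1 F hFpos hFle2 hFmono hδprop β ‖ξ‖ hβ0 hβ1 hr
  have e1 : ‖1 - phiHat n φ (β • ξ)‖ = F (β * ‖ξ‖) := by
    rw [hFnorm, norm_smul, Real.norm_eq_abs, abs_of_pos hβ0]
  have e2 : ‖1 - phiHat n φ ((β * ‖ξ‖⁻¹) • ξ)‖ = F β := by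
    rw [hFnorm, norm_smul, Real.norm_eq_abs, abs_of_pos (by positivity), mul_assoc,
      inv_mul_cancel₀ hr.ne', mul_one]
  rw [e1, e2, hMval β hβ0]
  exact haux
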